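/- Let G, H be groupoids and M a G-H bibundle which is a Morita equivalence (admits an H-G bibundle N with M ∘ N ≅ Id_G and N ∘ M ≅ Id_H). Then M is biprincipal: both moment maps are surjective, both the left G-action and right H-action are free, the right H-action is transitive on l_M-fibers, and the left G-action is transitive on r_M-fibers. -/

import Mathlib

/-- A set-theoretic groupoid. `comp g h` is defined when `src g = tgt h`
(i.e. `g` after `h`). -/
structure SGroupoid where
  Obj : Type
  Arr : Type
  src : Arr → Obj
  tgt : Arr → Obj
  id : Obj → Arr
  comp : Arr → Arr → Arr
  inv : Arr → Arr
  src_id : ∀ x, src (id x) = x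
  tgt_id : ∀ x, tgt (id x) = x
  src_comp : ∀ g h, src g = tgt h → src (comp g h) = src h
  tgt_comp : ∀ g h, src g = tgt h → tgt (comp g h) = tgt g
  comp_assoc : ∀ g h k, src g = tgt h → src h = tgt k →
    comp (comp g h) k = comp g (comp h k)
  id_comp : ∀ g, comp (id (tgt g)) g = g
  comp_id : ∀ g, comp g (id (src g)) = g
  src_inv : ∀ g, src (inv g) = tgt g
  tgt_inv : ∀ g, tgt (inv g) = src g
  comp_inv : ∀ g, comp g (inv g) = id (tgt g)
  inv_comp : ∀ g, comp (inv g) g = id (src g)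

/-- A set-theoretic `G`-`H` bibundle: a set `M` with moment maps
`l : M → G.Obj`, `r : M → H.Obj`, a left `G`-action `actL g m` (defined when
`G.src g = l m`) and a right `H`-action `actR m h` (defined when
`r m = H.tgt h`) which commute. -/
structure Bibundle (G H : SGroupoid) where
  M : Type
  l : M → G.Obj
  r : M → H.Obj
  actL : G.Arr → M → M
  actR : M → H.Arr → M
  l_actL : ∀ g m, G.src g = l m → l (actL g m) = G.tgt g
  r_actL : ∀ g m, G.src g = l m → r (actL g m) = r m
  l_actR : ∀ m h, r m = H.tgt h → l (actR m h) = l m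
  r_actR : ∀ m h, r m = H.tgt h → r (actR m h) = H.src h
  actL_comp : ∀ g g' m, G.src g = G.tgt g' → G.src g' = l m →
    actL (G.comp g g') m = actL g (actL g' m)
  actL_id : ∀ m, actL (G.id (l m)) m = m
  actR_comp : ∀ m h h', r m = H.tgt h → H.src h = H.tgt h' →
    actR m (H.comp h h') = actR (actR m h) h'
  actR_id : ∀ m, actR m (H.id (r m)) = m
  actLR : ∀ g m h, G.src g = l m → r m = H.tgt h →
    actR (actL g m) h = actL g (actR m h)

/-- The pull-back `M ×_{H₀} N` underlying the composition of bibundles. -/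
def CompC (G H K : SGroupoid) (B : Bibundle G H) (C : Bibundle H K) : Type :=
  {p : B.M × C.M // B.r p.1 = C.l p.2}

/-- The diagonal `H`-orbit relation on `M ×_{H₀} N`; the composition
`M ∘ N` is the quotient `Quot (CompRel G H K B C)`. -/
def CompRel' (G H K : SGroupoid) (B : Bibundle G H) (C : Bibundle H K) :
    CompC G H K B C → CompC G H K B C → Prop :=
  fun p q => ∃ h, B.r p.val.1 = H.tgt h ∧
    q.val = (B.actR p.val.1 h, C.actL (H.inv h) p.val.2)

/-- `CompIsoId G H B C` says that the composed `G`-`G` bibundle `B ∘ C` is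
isomorphic, as a bibundle, to `Id_G` (the groupoid `G` acting on itself by
left and right multiplication, with moment maps `tgt` and `src`): there is a
biequivariant bijection preserving both moment maps. -/
def CompIsoId (G H : SGroupoid) (B : Bibundle G H) (C : Bibundle H G) : Prop :=
  ∃ Φ : Quot (CompRel' G H G B C) → G.Arr,
    Function.Bijective Φ ∧
    (∀ p, G.tgt (Φ (Quot.mk (CompRel' G H G B C) p)) = B.l p.val.1) ∧
    (∀ p, G.src (Φ (Quot.mk (CompRel' G H G B C) p)) = C.r p.val.2) ∧
    (∀ (g : G.Arr) (p q : CompC G H G B C), G.src g = B.l p.val.1 →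
      q.val = (B.actL g p.val.1, p.val.2) →
      Φ (Quot.mk (CompRel' G H G B C) q) =
        G.comp g (Φ (Quot.mk (CompRel' G H G B C) p))) ∧
    (∀ (p q : CompC G H G B C) (g' : G.Arr), C.r p.val.2 = G.tgt g' →
      q.val = (p.val.1, C.actR p.val.2 g') →
      Φ (Quot.mk (CompRel' G H G B C) q) =
        G.comp (Φ (Quot.mk (CompRel' G H G B C) p)) g')

/-- `M` is a Morita equivalence if there is an `H`-`G` bibundle `N` with
bibundle isomorphisms `M ∘ N ≅ Id_G` and `N ∘ M ≅ Id_H`. -/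
def Morita (G H : SGroupoid) (B : Bibundle G H) : Prop :=
  ∃ C : Bibundle H G, CompIsoId G H B C ∧ CompIsoId H G C B

namespace SGroupoid
variable (G : SGroupoid)

theorem inv_id (x : G.Obj) : G.inv (G.id x) = G.id x := by
  have h1 := G.comp_inv (G.id x)
  rw [G.tgt_id] at h1
  have h2 := G.id_comp (G.inv (G.id x))
  rw [G.tgt_inv, G.src_id] at h2
  exact h2.symm.trans h1

theorem inv_inv (g : G.Arr) : G.inv (G.inv g) = g := by
  have h1 := G.id_comp (G.inv (G.inv g))
  rw [G.tgt_inv, G.src_inv] at h1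
  have h2 : G.comp (G.comp g (G.inv g)) (G.inv (G.inv g)) = G.inv (G.inv g) := by
    rw [G.comp_inv]; exact h1
  have h3 : G.comp (G.comp g (G.inv g)) (G.inv (G.inv g))
      = G.comp g (G.comp (G.inv g) (G.inv (G.inv g))) :=
    G.comp_assoc _ _ _ (G.tgt_inv g).symm (G.tgt_inv (G.inv g)).symm
  have h4 : G.comp (G.inv g) (G.inv (G.inv g)) = G.id (G.src g) := by
    rw [G.comp_inv, G.tgt_inv]
  rw [h3, h4, G.comp_id] at h2
  exact h2.symm

theorem eq_id_of_comp_left {g a : G.Arr} (hc : G.src g = G.tgt a)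
    (h : G.comp g a = a) : g = G.id (G.tgt a) := by
  have h1 : G.comp (G.comp g a) (G.inv a) = G.comp g (G.comp a (G.inv a)) :=
    G.comp_assoc _ _ _ hc (G.tgt_inv a).symm
  rw [h, G.comp_inv] at h1
  have h2 : G.comp g (G.id (G.tgt a)) = g := by rw [← hc, G.comp_id]
  exact (h1.trans h2).symm

theorem eq_id_of_comp_right {a h : G.Arr} (hc : G.src a = G.tgt h)
    (hh : G.comp a h = a) : h = G.id (G.src a) := by
  have h1 : G.comp (G.comp (G.inv a) a) h = G.comp (G.inv a) (G.comp a h) :=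
    G.comp_assoc _ _ _ (G.src_inv a) hc
  rw [hh, G.inv_comp] at h1
  have h2 : G.comp (G.id (G.src a)) h = h := by rw [hc]; exact G.id_comp h
  exact h2.symm.trans h1

theorem inv_comp' {g h : G.Arr} (hc : G.src g = G.tgt h) :
    G.inv (G.comp g h) = G.comp (G.inv h) (G.inv g) := by
  have c1 : G.src (G.inv h) = G.tgt (G.inv g) :=
    (G.src_inv h).trans (hc.symm.trans (G.tgt_inv g).symm)
  have hsk : G.src (G.comp g h) = G.src h := G.src_comp _ _ hc
  have htk : G.tgt (G.comp g h) = G.tgt g := G.tgt_comp _ _ hc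
  have hsu : G.src (G.comp (G.inv h) (G.inv g)) = G.tgt g := by
    rw [G.src_comp _ _ c1, G.src_inv]
  have a2 : G.comp (G.inv g) (G.comp g h) = h := by
    rw [← G.comp_assoc _ _ _ (G.src_inv g) hc, G.inv_comp, hc, G.id_comp]
  have huk : G.comp (G.comp (G.inv h) (G.inv g)) (G.comp g h) = G.id (G.src h) := by
    rw [G.comp_assoc _ _ _ c1 ((G.src_inv g).trans htk.symm), a2, G.inv_comp]
  have b1 : G.comp (G.id (G.src h)) (G.inv (G.comp g h)) = G.inv (G.comp g h) := by
    have := G.id_comp (G.inv (G.comp g h))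
    rwa [G.tgt_inv, hsk] at this
  rw [← huk] at b1
  have b2 : G.comp (G.comp (G.comp (G.inv h) (G.inv g)) (G.comp g h)) (G.inv (G.comp g h))
      = G.comp (G.comp (G.inv h) (G.inv g)) (G.comp (G.comp g h) (G.inv (G.comp g h))) :=
    G.comp_assoc _ _ _ (hsu.trans htk.symm) (G.tgt_inv _).symm
  rw [b2, G.comp_inv, htk, ← hsu, G.comp_id] at b1
  exact b1.symm

end SGroupoid

theorem compRel_equivalence (G H K : SGroupoid) (B : Bibundle G H) (C : Bibundle H K) :
    Equivalence (CompRel' G H K B C) := by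
  constructor
  · intro p
    refine ⟨H.id (B.r p.val.1), (H.tgt_id _).symm, ?_⟩
    have e1 : B.actR p.val.1 (H.id (B.r p.val.1)) = p.val.1 := B.actR_id _
    have e2 : C.actL (H.inv (H.id (B.r p.val.1))) p.val.2 = p.val.2 := by
      rw [H.inv_id, p.property, C.actL_id]
    rw [e1, e2]
  · rintro p q ⟨h, ht, hq⟩
    have e1 : q.val.1 = B.actR p.val.1 h := congrArg Prod.fst hq
    have e2 : q.val.2 = C.actL (H.inv h) p.val.2 := congrArg Prod.snd hq
    have c1 : H.src h = H.tgt (H.inv h) := (H.tgt_inv h).symm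
    have c2 : H.src (H.inv h) = C.l p.val.2 :=
      (H.src_inv h).trans (ht.symm.trans p.property)
    refine ⟨H.inv h, ?_, ?_⟩
    · rw [e1, B.r_actR _ _ ht]; exact c1
    · have f1 : B.actR q.val.1 (H.inv h) = p.val.1 := by
        rw [e1, ← B.actR_comp _ _ _ ht c1, H.comp_inv, ← ht, B.actR_id]
      have f2 : C.actL (H.inv (H.inv h)) q.val.2 = p.val.2 := by
        rw [e2, H.inv_inv, ← C.actL_comp _ _ _ c1 c2, H.comp_inv, ← ht, p.property,
          C.actL_id]
      rw [f1, f2]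
  · rintro p q r ⟨h, ht, hq⟩ ⟨h', ht', hr⟩
    have e1 : q.val.1 = B.actR p.val.1 h := congrArg Prod.fst hq
    have e2 : q.val.2 = C.actL (H.inv h) p.val.2 := congrArg Prod.snd hq
    have cnd : H.src h = H.tgt h' := by
      rw [e1, B.r_actR _ _ ht] at ht'; exact ht'
    have c2 : H.src (H.inv h) = C.l p.val.2 :=
      (H.src_inv h).trans (ht.symm.trans p.property)
    have c3 : H.src (H.inv h') = H.tgt (H.inv h) :=
      (H.src_inv h').trans (cnd.symm.trans (H.tgt_inv h).symm)
    refine ⟨H.comp h h', ht.trans (H.tgt_comp h h' cnd).symm, ?_⟩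
    have f1 : B.actR p.val.1 (H.comp h h') = r.val.1 := by
      rw [B.actR_comp _ _ _ ht cnd, ← e1]
      exact (congrArg Prod.fst hr).symm
    have f2 : C.actL (H.inv (H.comp h h')) p.val.2 = r.val.2 := by
      rw [H.inv_comp' cnd, C.actL_comp _ _ _ c3 c2, ← e2]
      exact (congrArg Prod.snd hr).symm
    rw [f1, f2]

theorem compRel_of_quot_eq (G H K : SGroupoid) (B : Bibundle G H) (C : Bibundle H K)
    {p q : CompC G H K B C}
    (h : Quot.mk (CompRel' G H K B C) p = Quot.mk (CompRel' G H K B C) q) :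
    CompRel' G H K B C p q :=
  ((compRel_equivalence G H K B C).eqvGen_iff).mp (Quot.eqvGen_exact h)

theorem surj_aux (G H : SGroupoid) (B : Bibundle G H) (C : Bibundle H G)
    (h : CompIsoId G H B C) (x : G.Obj) :
    ∃ p : CompC G H G B C, B.l p.val.1 = x ∧ C.r p.val.2 = x := by
  obtain ⟨Φ, ⟨_, Φsurj⟩, Φtgt, Φsrc, _, _⟩ := h
  obtain ⟨z, hz⟩ := Φsurj (G.id x)
  obtain ⟨p, rfl⟩ := Quot.exists_rep z
  refine ⟨p, ?_, ?_⟩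
  · rw [← Φtgt p, hz, G.tgt_id]
  · rw [← Φsrc p, hz, G.src_id]

/-- A Morita equivalence bibundle is biprincipal: both moment maps are
surjective, both actions are free, the right action is transitive on left
fibers, and the left action is transitive on right fibers. -/
theorem stmt16 (G H : SGroupoid) (B : Bibundle G H) (hM : Morita G H B) :
    Function.Surjective B.l ∧
    Function.Surjective B.r ∧
    (∀ g m, G.src g = B.l m → B.actL g m = m → g = G.id (B.l m)) ∧
    (∀ m h, B.r m = H.tgt h → B.actR m h = m → h = H.id (B.r m)) ∧
    (∀ m m', B.l m = B.l m' → ∃ h, B.r m = H.tgt h ∧ B.actR m h = m') ∧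
    (∀ m m', B.r m = B.r m' → ∃ g, G.src g = B.l m' ∧ B.actL g m' = m) := by
  obtain ⟨C, hBC, hCB⟩ := hM
  refine ⟨?_, ?_, ?_, ?_, ?_, ?_⟩
  · -- B.l surjective
    intro x
    obtain ⟨p, h1, _⟩ := surj_aux G H B C hBC x
    exact ⟨p.val.1, h1⟩
  · -- B.r surjective
    intro y
    obtain ⟨p, _, h2⟩ := surj_aux H G C B hCB y
    exact ⟨p.val.2, h2⟩
  · -- left action free
    intro g m hs hfix
    obtain ⟨pc, hc, _⟩ := surj_aux H G C B hCB (B.r m)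
    let P : CompC G H G B C := ⟨(m, pc.val.1), hc.symm⟩
    obtain ⟨Φ, ⟨Φinj, Φsurj⟩, Φtgt, Φsrc, ΦL, ΦR⟩ := hBC
    have heq : Φ (Quot.mk (CompRel' G H G B C) P) =
        G.comp g (Φ (Quot.mk (CompRel' G H G B C) P)) := by
      refine ΦL g P P hs ?_
      show (m, pc.val.1) = (B.actL g m, pc.val.1)
      rw [hfix]
    have hcmp : G.src g = G.tgt (Φ (Quot.mk (CompRel' G H G B C) P)) := by
      have h1 : G.tgt (Φ (Quot.mk (CompRel' G H G B C) P)) = B.l m := Φtgt P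
      rw [h1]; exact hs
    have h2 : g = G.id (G.tgt (Φ (Quot.mk (CompRel' G H G B C) P))) :=
      G.eq_id_of_comp_left hcmp heq.symm
    have h1 : G.tgt (Φ (Quot.mk (CompRel' G H G B C) P)) = B.l m := Φtgt P
    rw [h1] at h2
    exact h2
  · -- right action free
    intro m h ht hfix
    obtain ⟨pc, _, hc⟩ := surj_aux G H B C hBC (B.l m)
    let P : CompC H G H C B := ⟨(pc.val.2, m), hc⟩
    obtain ⟨Ψ, ⟨Ψinj, Ψsurj⟩, Ψtgt, Ψsrc, ΨL, ΨR⟩ := hCB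
    have heq : Ψ (Quot.mk (CompRel' H G H C B) P) =
        H.comp (Ψ (Quot.mk (CompRel' H G H C B) P)) h := by
      refine ΨR P P h ht ?_
      show (pc.val.2, m) = (pc.val.2, B.actR m h)
      rw [hfix]
    have hcmp : H.src (Ψ (Quot.mk (CompRel' H G H C B) P)) = H.tgt h := by
      have h1 : H.src (Ψ (Quot.mk (CompRel' H G H C B) P)) = B.r m := Ψsrc P
      rw [h1]; exact ht
    have h2 : h = H.id (H.src (Ψ (Quot.mk (CompRel' H G H C B) P))) :=
      H.eq_id_of_comp_right hcmp heq.symm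
    have h1 : H.src (Ψ (Quot.mk (CompRel' H G H C B) P)) = B.r m := Ψsrc P
    rw [h1] at h2
    exact h2
  · -- right action transitive on l-fibers
    intro m m' hl
    obtain ⟨pc, hc, _⟩ := surj_aux H G C B hCB (B.r m)
    obtain ⟨pc', hc', _⟩ := surj_aux H G C B hCB (B.r m')
    let P : CompC G H G B C := ⟨(m, pc.val.1), hc.symm⟩
    let P' : CompC G H G B C := ⟨(m', pc'.val.1), hc'.symm⟩
    obtain ⟨Φ, ⟨Φinj, Φsurj⟩, Φtgt, Φsrc, ΦL, ΦR⟩ := hBC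
    set a := Φ (Quot.mk (CompRel' G H G B C) P) with ha
    set a' := Φ (Quot.mk (CompRel' G H G B C) P') with ha'
    have hta : G.tgt a = B.l m := Φtgt P
    have hta' : G.tgt a' = B.l m' := Φtgt P'
    have hsa : G.src a = C.r pc.val.1 := Φsrc P
    have cnd : G.src (G.inv a) = G.tgt a' :=
      (G.src_inv a).trans (hta.trans (hl.trans hta'.symm))
    have hcr : C.r pc.val.1 = G.tgt (G.comp (G.inv a) a') := by
      rw [G.tgt_comp _ _ cnd, G.tgt_inv]; exact hsa.symm
    let Q : CompC G H G B C := ⟨(m, C.actR pc.val.1 (G.comp (G.inv a) a')), by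
      show B.r m = C.l (C.actR pc.val.1 (G.comp (G.inv a) a'))
      rw [C.l_actR _ _ hcr]; exact hc.symm⟩
    have heq : Φ (Quot.mk (CompRel' G H G B C) Q) = G.comp a (G.comp (G.inv a) a') :=
      ΦR P Q (G.comp (G.inv a) a') hcr rfl
    have hcomp : G.comp a (G.comp (G.inv a) a') = a' := by
      rw [← G.comp_assoc a (G.inv a) a' (G.tgt_inv a).symm cnd, G.comp_inv]
      have h3 : G.tgt a = G.tgt a' := hta.trans (hl.trans hta'.symm)
      rw [h3, G.id_comp]
    have hQP' : Quot.mk (CompRel' G H G B C) Q = Quot.mk (CompRel' G H G B C) P' :=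
      Φinj (by rw [heq, hcomp])
    obtain ⟨h, hht, hhq⟩ := compRel_of_quot_eq G H G B C hQP'
    have hh1 : B.r m = H.tgt h := hht
    have hh2 : m' = B.actR m h := congrArg Prod.fst hhq
    exact ⟨h, hh1, hh2.symm⟩
  · -- left action transitive on r-fibers
    intro m m' hr
    obtain ⟨pc, _, hc⟩ := surj_aux G H B C hBC (B.l m)
    obtain ⟨pc', _, hc'⟩ := surj_aux G H B C hBC (B.l m')
    let P : CompC H G H C B := ⟨(pc.val.2, m), hc⟩
    let P' : CompC H G H C B := ⟨(pc'.val.2, m'), hc'⟩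
    obtain ⟨Ψ, ⟨Ψinj, Ψsurj⟩, Ψtgt, Ψsrc, ΨL, ΨR⟩ := hCB
    set a := Ψ (Quot.mk (CompRel' H G H C B) P) with ha
    set a' := Ψ (Quot.mk (CompRel' H G H C B) P') with ha'
    have hsa : H.src a = B.r m := Ψsrc P
    have hsa' : H.src a' = B.r m' := Ψsrc P'
    have hta' : H.tgt a' = C.l pc'.val.2 := Ψtgt P'
    have cnd : H.src a = H.tgt (H.inv a') :=
      hsa.trans (hr.trans (hsa'.symm.trans (H.tgt_inv a').symm))
    have hsh0 : H.src (H.comp a (H.inv a')) = C.l pc'.val.2 := by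
      rw [H.src_comp _ _ cnd, H.src_inv]; exact hta'
    let Q : CompC H G H C B := ⟨(C.actL (H.comp a (H.inv a')) pc'.val.2, m'), by
      show C.r (C.actL (H.comp a (H.inv a')) pc'.val.2) = B.l m'
      rw [C.r_actL _ _ hsh0]; exact hc'⟩
    have heq : Ψ (Quot.mk (CompRel' H G H C B) Q) = H.comp (H.comp a (H.inv a')) a' :=
      ΨL (H.comp a (H.inv a')) P' Q hsh0 rfl
    have hcomp : H.comp (H.comp a (H.inv a')) a' = a := by
      rw [H.comp_assoc a (H.inv a') a' cnd (H.src_inv a'), H.inv_comp]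
      have h3 : H.src a' = H.src a := hsa'.trans (hr.symm.trans hsa.symm)
      rw [h3, H.comp_id]
    have hQP : Quot.mk (CompRel' H G H C B) Q = Quot.mk (CompRel' H G H C B) P :=
      Ψinj (by rw [heq, hcomp])
    obtain ⟨k, hkt, hkq⟩ := compRel_of_quot_eq H G H C B hQP
    have hk2 : m = B.actL (G.inv k) m' := congrArg Prod.snd hkq
    have hktgt : G.tgt k = B.l m' := by
      have hq1 : C.r (C.actL (H.comp a (H.inv a')) pc'.val.2) = B.l m' := Q.property
      have hkt' : C.r (C.actL (H.comp a (H.inv a')) pc'.val.2) = G.tgt k := hkt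
      exact hkt'.symm.trans hq1
    refine ⟨G.inv k, ?_, hk2.symm⟩
    rw [G.src_inv]; exact hktgt
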